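/- In the semigroup H, for any nonempty word X and any (possibly empty) words V, Z, all in the letters a1, a2, a3: P·X·V·R·Z·s1·Q·X = X·P·V·R·s1·Z·X·Q. -/

import Mathlib

inductive Phi
  | L | M | P | Q | R | g | s1 | s2 | t1 | t2 | t3 | a1 | a2 | a3
deriving DecidableEq

open Phi

abbrev W0 := WithZero (FreeMonoid Phi)

def w (l : List Phi) : W0 := ((FreeMonoid.ofList l : FreeMonoid Phi) : W0)

def ai : Fin 3 → Phi
  | 0 => a1 | 1 => a2 | 2 => a3

def ti : Fin 3 → Phi
  | 0 => t1 | 1 => t2 | 2 => t3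

def si : Fin 2 → Phi
  | 0 => s1 | 1 => s2

/-- `x` is one of the letters `a1, a2, a3`. -/
def isA (x : Phi) : Prop := x = a1 ∨ x = a2 ∨ x = a3

/-- The defining relations (1)–(14) of the semigroup `H`. -/
inductive rel : W0 → W0 → Prop
  | r1L (x : Phi) : rel (w [x, L]) 0
  | r1M (x : Phi) : rel (w [x, M]) 0
  | r2 : rel (w [L]) (w [M, P, g])
  | r3 (i : Fin 3) : rel (w [g, ai i]) (w [ai i, g])
  | r4 (x : Phi) (h : ¬ isA x) : rel (w [g, x]) 0
  | r5 (i j : Fin 3) : rel (w [ai i, g, ai j]) (w [ai i, R, s1, Q, ai j])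
  | r6 (i : Fin 3) (x : Phi) (h : x = R ∨ isA x) : rel (w [ti i, x]) (w [x, ti i])
  | r7 (i : Fin 3) : rel (w [P, ai i, ti i]) (w [ai i, P, s1])
  | r8 (i j : Fin 3) (h : i ≠ j) : rel (w [P, ai j, ti i]) (w [ai j, P, s2])
  | r9 (i : Fin 3) (j : Fin 2) : rel (w [si j, ai i]) (w [ai i, si j])
  | r10 : rel (w [s1, R]) (w [R, s1])
  | r11 (i : Fin 3) : rel (w [s1, Q, ai i]) (w [ti i, ai i, Q])
  | r12 : rel (w [P, R, s1]) 0
  | r13 (i : Fin 3) : rel (w [s2, R, ai i]) (w [ai i, s2, R])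
  | r14 (i : Fin 3) : rel (w [s2, R, Q, ai i]) (w [R, ti i, ai i, Q])

/-- The congruence on the free monoid with zero generated by the relations. -/
def hCon : Con W0 := conGen rel

/-- The semigroup (with zero) `H` of the paper. -/
abbrev H := hCon.Quotient

/-- The quotient map. -/
def q : W0 →* H := hCon.mk'

/-- `l` is a word in the letters `a1, a2, a3`. -/
def Aword (l : List Phi) : Prop := ∀ x ∈ l, isA x

/-- `l` is square-free: it contains no factor `Y ++ Y` with `Y` nonempty. -/
def SqFree (l : List Phi) : Prop := ∀ Y : List Phi, Y ≠ [] → ¬ (Y ++ Y) <:+: l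


/-!
Write `U` for any word in `R, a1, a2, a3`; both `t_i` and `s1` commute with such words.
For a letter `a = a_i`, relation (11) turns `s1 Q a` into `t_i a Q`; `t_i` travels left through
`U a` to meet `P a`, relation (7) turns `P a t_i` into `a P s1`, and `s1` travels right again:
`P a U s1 Q a = a P (U a) s1 Q`. Iterating over the letters of `X` gives
`P X U s1 Q X = X P (U X) s1 Q`, and for `U = V R Z` one last pass of `s1` through `Z X`
yields the theorem.
-/

open Phi

def word (l : List Phi) : H := q (w l)

lemma word_append (l₁ l₂ : List Phi) : word (l₁ ++ l₂) = word l₁ * word l₂ := by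
  rw [word, w, FreeMonoid.ofList_append, WithZero.coe_mul, map_mul]
  rfl

lemma word_cons (x : Phi) (l : List Phi) : word (x :: l) = word [x] * word l :=
  word_append [x] l

lemma word_nil : word [] = 1 := map_one q

lemma word_eq_of_rel {u v : List Phi} (h : rel (w u) (w v)) : word u = word v :=
  (Con.eq hCon).2 (ConGen.Rel.of _ _ h)

lemma exists_ai_eq {x : Phi} (h : isA x) : ∃ i : Fin 3, ai i = x := by
  rcases h with rfl | rfl | rfl
  exacts [⟨0, rfl⟩, ⟨1, rfl⟩, ⟨2, rfl⟩]

def ARword (l : List Phi) : Prop := ∀ x ∈ l, x = R ∨ isA x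

lemma Aword.arword {l : List Phi} (h : Aword l) : ARword l := fun x hx => .inr (h x hx)

lemma ARword.append {l₁ l₂ : List Phi} (h₁ : ARword l₁) (h₂ : ARword l₂) : ARword (l₁ ++ l₂) :=
  List.forall_mem_append.2 ⟨h₁, h₂⟩

lemma ARword.cons {x : Phi} {l : List Phi} (hx : x = R ∨ isA x) (h : ARword l) :
    ARword (x :: l) :=
  List.forall_mem_cons.2 ⟨hx, h⟩

lemma ARword.concat {l : List Phi} {x : Phi} (h : ARword l) (hx : x = R ∨ isA x) :
    ARword (l ++ [x]) :=
  h.append (List.forall_mem_singleton.2 hx)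

lemma commute_word_of_forall_mem {x : Phi} {U : List Phi}
    (h : ∀ y ∈ U, word [x, y] = word [y, x]) : Commute (word [x]) (word U) := by
  induction U with
  | nil => exact word_nil ▸ Commute.one_right _
  | cons y U ih =>
    rw [word_cons y U]
    refine .mul_right ?_ (ih fun z hz => h z (List.mem_cons_of_mem _ hz))
    simpa only [Commute, SemiconjBy, ← word_append, List.singleton_append] using h y List.mem_cons_self

lemma commute_ti_word (i : Fin 3) {U : List Phi} (hU : ARword U) :
    Commute (word [ti i]) (word U) :=
  commute_word_of_forall_mem fun y hy => word_eq_of_rel (rel.r6 i y (hU y hy))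

lemma commute_s1_word {U : List Phi} (hU : ARword U) :
    Commute (word [s1]) (word U) := by
  refine commute_word_of_forall_mem fun y hy => ?_
  rcases hU y hy with rfl | hA
  · exact word_eq_of_rel rel.r10
  · obtain ⟨i, rfl⟩ := exists_ai_eq hA
    exact word_eq_of_rel (rel.r9 i 0)

lemma word_P_a_s1_Q_a {a : Phi} (ha : isA a) {U : List Phi} (hU : ARword U) :
    word [P, a] * word U * word [s1, Q, a] = word [a, P] * word (U ++ [a]) * word [s1, Q] := by
  obtain ⟨i, rfl⟩ := exists_ai_eq ha
  calc word [P, ai i] * word U * word [s1, Q, ai i]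
      = word [P, ai i] * word U * word [ti i, ai i, Q] := by rw [word_eq_of_rel (rel.r11 i)]
    _ = word [P, ai i] * (word U * word [ti i]) * word [ai i, Q] := by
      simp only [← word_append, List.append_assoc, List.cons_append, List.nil_append]
    _ = word [P, ai i] * (word [ti i] * word U) * word [ai i, Q] := by
      rw [(commute_ti_word i hU).eq]
    _ = word [P, ai i, ti i] * word U * word [ai i, Q] := by
      simp only [← word_append, List.cons_append, List.nil_append]
    _ = word [ai i, P, s1] * word U * word [ai i, Q] := by rw [word_eq_of_rel (rel.r7 i)]
    _ = word [ai i, P] * (word [s1] * word (U ++ [ai i])) * word [Q] := by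
      simp only [← word_append, List.append_assoc, List.cons_append, List.nil_append]
    _ = word [ai i, P] * (word (U ++ [ai i]) * word [s1]) * word [Q] := by
      rw [(commute_s1_word (hU.concat (.inr ha))).eq]
    _ = word [ai i, P] * word (U ++ [ai i]) * word [s1, Q] := by
      simp only [← word_append, List.append_assoc, List.cons_append, List.nil_append]

lemma word_P_word_s1_Q_word {X : List Phi} (hX : Aword X) {U : List Phi} (hU : ARword U) :
    word (P :: X) * word U * word (s1 :: Q :: X) =
      word (X ++ [P]) * word (U ++ X) * word [s1, Q] := by
  induction X generalizing U with
  | nil => simp only [List.nil_append, List.append_nil]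
  | cons a T ih =>
    obtain ⟨ha, hT⟩ : isA a ∧ Aword T := List.forall_mem_cons.1 hX
    have hUa : ARword (U ++ [a]) := hU.concat (.inr ha)
    calc word (P :: a :: T) * word U * word (s1 :: Q :: a :: T)
        = word [P, a] * word (T ++ U) * word [s1, Q, a] * word T := by
          simp only [← word_append, List.append_assoc, List.cons_append, List.nil_append]
      _ = word [a, P] * word (T ++ U ++ [a]) * word [s1, Q] * word T := by
          rw [word_P_a_s1_Q_a ha (hT.arword.append hU)]
      _ = word [a] * (word (P :: T) * word (U ++ [a]) * word (s1 :: Q :: T)) := by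
          simp only [← word_append, List.append_assoc, List.cons_append, List.nil_append]
      _ = word [a] * (word (T ++ [P]) * word (U ++ [a] ++ T) * word [s1, Q]) := by
          rw [ih hT hUa]
      _ = word (a :: T ++ [P]) * word (U ++ a :: T) * word [s1, Q] := by
          simp only [← word_append, List.append_assoc, List.cons_append, List.nil_append]

theorem stmt5_general (X V Z : List Phi) (hX : Aword X)
    (hV : Aword V) (hZ : Aword Z) :
    q (w ([P] ++ X ++ V ++ [R] ++ Z ++ [s1, Q] ++ X)) =
      q (w (X ++ [P] ++ V ++ [R, s1] ++ Z ++ X ++ [Q])) := by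
  have hVRZ : ARword (V ++ R :: Z) := hV.arword.append (.cons (.inl rfl) hZ.arword)
  show word _ = word _
  calc word ([P] ++ X ++ V ++ [R] ++ Z ++ [s1, Q] ++ X)
      = word (P :: X) * word (V ++ R :: Z) * word (s1 :: Q :: X) := by
        simp only [← word_append, List.append_assoc, List.cons_append, List.nil_append]
    _ = word (X ++ [P]) * word (V ++ R :: Z ++ X) * word [s1, Q] := word_P_word_s1_Q_word hX hVRZ
    _ = word (X ++ [P] ++ V ++ [R]) * (word (Z ++ X) * word [s1]) * word [Q] := by
        simp only [← word_append, List.append_assoc, List.cons_append, List.nil_append]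
    _ = word (X ++ [P] ++ V ++ [R]) * (word [s1] * word (Z ++ X)) * word [Q] := by
        rw [(commute_s1_word (hZ.arword.append hX.arword)).eq]
    _ = word (X ++ [P] ++ V ++ [R, s1] ++ Z ++ X ++ [Q]) := by
        simp only [← word_append, List.append_assoc, List.cons_append, List.nil_append]

/-- for any nonempty word `X` and words `V, Z` in `a1,a2,a3`:
`P·X·V·R·Z·s1·Q·X = X·P·V·R·s1·Z·X·Q`. -/
theorem stmt5 (X V Z : List Phi) (hX : Aword X) (hXne : X ≠ [])
    (hV : Aword V) (hZ : Aword Z) :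
    q (w ([P] ++ X ++ V ++ [R] ++ Z ++ [s1, Q] ++ X)) =
      q (w (X ++ [P] ++ V ++ [R, s1] ++ Z ++ X ++ [Q])) :=
  stmt5_general X V Z hX hV hZ
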